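/- Let P be a K×K row-stochastic real matrix, μ a probability vector on {1,…,K}, a₁, σ : {1,…,K} → ℝ, and λ = max_{1≤k≤K} Σ_{j=1}^{K} P_{kj} a₁(j)². Let (Z_t)_{t≥1} be a Markov chain on {1,…,K} with transition matrix P and initial distribution μ, and let (ε_m)_{m≥0} be i.i.d. standard normal random variables independent of (Z_t)_{t≥1}. If λ < 1, then for every t ≥ 1, E[(Σ_{m=0}^{t-1} |(Π_{i=2}^{m+1} a₁(Z_i)) · σ(Z₁) · ε_m|)²] ≤ 2 · ((1 + μ′ σ̄² 𝟙) / (1 − λ^{1/2}))², where μ′ σ̄² 𝟙 = Σ_{k=1}^{K} μ_k σ(k)². -/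

import Mathlib

open MeasureTheory ProbabilityTheory Finset

/-!
Write `X_m = a₁(Z₁)⋯a₁(Z_m) σ(Z₀)`, a function of the path `(Z₀, …, Z_m)`. Since `X_m` is
independent of the standard normal `ε_m`, the `m`-th summand has second moment `E[X_m²]`.
Expanding `E[X_m²]` as a sum over paths and summing out the last state one step at a time gives
`E[X_m²] ≤ S λ^m` with `S = Σ_k μ_k σ(k)²`. Minkowski's inequality in `L²` then bounds the `L²`
norm of the whole sum by `Σ_m √S λ^{m/2} ≤ √S / (1 - √λ)`, and `S ≤ 2 (1 + S)²`.
-/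

theorem sum_path_weights_le {ι : Type*} [Fintype ι] {w : ι → ℝ} {Q : ι → ι → ℝ} {lam : ℝ}
    (hw : ∀ i, 0 ≤ w i) (hQ : ∀ i j, 0 ≤ Q i j) (hrow : ∀ i, ∑ j, Q i j ≤ lam)
    (hlam : 0 ≤ lam) (m : ℕ) :
    ∑ z : Fin (m + 1) → ι, w (z 0) * ∏ i : Fin m, Q (z i.castSucc) (z i.succ)
      ≤ (∑ i, w i) * lam ^ m := by
  induction m with
  | zero => simp [← (Equiv.funUnique (Fin 1) ι).symm.sum_comp]
  | succ m ih =>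
    set W : (Fin (m + 1) → ι) → ℝ :=
      fun y => w (y 0) * ∏ i : Fin m, Q (y i.castSucc) (y i.succ)
    have hW : ∀ y, 0 ≤ W y := fun y => mul_nonneg (hw _) (prod_nonneg fun _ _ => hQ _ _)
    calc ∑ z : Fin (m + 2) → ι, w (z 0) * ∏ i : Fin (m + 1), Q (z i.castSucc) (z i.succ)
        = ∑ y : Fin (m + 1) → ι, W y * ∑ j, Q (y (Fin.last m)) j := by
          rw [← (Fin.snocEquiv fun _ => ι).sum_comp, Fintype.sum_prod_type_right]
          refine sum_congr rfl fun y _ => ?_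
          rw [mul_sum]
          refine sum_congr rfl fun j _ => ?_
          have h0 : Fin.snoc (α := fun _ => ι) y j 0 = y 0 := Fin.snoc_castSucc (i := 0) ..
          simp only [W, Fin.snocEquiv, Equiv.coe_fn_mk, Fin.prod_univ_castSucc, Fin.succ_castSucc,
            Fin.snoc_castSucc, Fin.succ_last, Fin.snoc_last, h0]
          ring
      _ ≤ ∑ y : Fin (m + 1) → ι, W y * lam :=
          sum_le_sum fun y _ => mul_le_mul_of_nonneg_left (hrow _) (hW y)
      _ ≤ (∑ i, w i) * lam ^ m * lam := by
          rw [← sum_mul]; exact mul_le_mul_of_nonneg_right ih hlam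
      _ = (∑ i, w i) * lam ^ (m + 1) := by ring

section

variable {Ω : Type*} [mΩ : MeasurableSpace Ω] {μ : Measure Ω}

theorem integral_comp_eq_sum_measureReal_preimage {α : Type*} [Fintype α] [MeasurableSpace α]
    [MeasurableSingletonClass α] [IsFiniteMeasure μ] {V : Ω → α} (hV : Measurable V)
    (f : α → ℝ) : ∫ ω, f (V ω) ∂μ = ∑ x, μ.real (V ⁻¹' {x}) * f x := by
  rw [← integral_map hV.aemeasurable (measurable_of_finite f).aestronglyMeasurable,
    integral_fintype .of_finite]
  simp [map_measureReal_apply hV (measurableSet_singleton _)]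

theorem integral_sq_eq_toReal_eLpNorm_sq {f : Ω → ℝ} (hf : MemLp f 2 μ) :
    ∫ ω, f ω ^ 2 ∂μ = (eLpNorm f 2 μ).toReal ^ 2 := by
  rw [← Lp.norm_toLp f hf, ← real_inner_self_eq_norm_sq, L2.inner_def]
  refine integral_congr_ae ?_
  filter_upwards [hf.coeFn_toLp] with ω hω
  simp [hω, sq]

theorem integral_sq_sum_le_sq_sum_sqrt {ι : Type*} {s : Finset ι} {f : ι → Ω → ℝ}
    (hf : ∀ i ∈ s, MemLp (f i) 2 μ) :
    ∫ ω, (∑ i ∈ s, f i ω) ^ 2 ∂μ ≤ (∑ i ∈ s, √(∫ ω, f i ω ^ 2 ∂μ)) ^ 2 := by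
  have hfin : ∀ i ∈ s, eLpNorm (f i) 2 μ ≠ ⊤ := fun i hi => (hf i hi).eLpNorm_ne_top
  have hnorm : ∀ i ∈ s, √(∫ ω, f i ω ^ 2 ∂μ) = (eLpNorm (f i) 2 μ).toReal := fun i hi => by
    rw [integral_sq_eq_toReal_eLpNorm_sq (hf i hi), Real.sqrt_sq ENNReal.toReal_nonneg]
  have hminkowski : eLpNorm (∑ i ∈ s, f i) 2 μ ≤ ∑ i ∈ s, eLpNorm (f i) 2 μ :=
    eLpNorm_sum_le (fun i hi => (hf i hi).1) one_le_two
  calc ∫ ω, (∑ i ∈ s, f i ω) ^ 2 ∂μ = (eLpNorm (∑ i ∈ s, f i) 2 μ).toReal ^ 2 := by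
        simpa [Finset.sum_apply] using integral_sq_eq_toReal_eLpNorm_sq (memLp_finsetSum' s hf)
    _ ≤ (∑ i ∈ s, (eLpNorm (f i) 2 μ).toReal) ^ 2 := by
        rw [← ENNReal.toReal_sum hfin]
        gcongr
        exact ENNReal.sum_ne_top.mpr hfin
    _ = (∑ i ∈ s, √(∫ ω, f i ω ^ 2 ∂μ)) ^ 2 := by rw [sum_congr rfl hnorm]

theorem memLp_of_map_eq_gaussianReal {X : Ω → ℝ} (hX : Measurable X) {m : ℝ} {v : NNReal}
    (h : μ.map X = gaussianReal m v) (p : NNReal) : MemLp X p μ :=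
  (memLp_map_measure_iff aestronglyMeasurable_id hX.aemeasurable).1
    (h ▸ memLp_id_gaussianReal p)

theorem integral_sq_eq_one_of_map_eq_gaussianReal {X : Ω → ℝ} (hX : Measurable X)
    (h : μ.map X = gaussianReal 0 1) : ∫ ω, X ω ^ 2 ∂μ = 1 := by
  have hvar : Var[id; gaussianReal 0 1] = ∫ x, id x ^ 2 ∂gaussianReal 0 1 :=
    variance_of_integral_eq_zero aemeasurable_id integral_id_gaussianReal
  rw [← integral_map (f := fun x : ℝ => x ^ 2) hX.aemeasurable (by fun_prop), h]
  simpa [variance_id_gaussianReal] using hvar.symm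

theorem memLp_comp_of_finite {α : Type*} [Finite α] [MeasurableSpace α]
    [DiscreteMeasurableSpace α] [IsFiniteMeasure μ] {V : Ω → α} (hV : Measurable V)
    (g : α → ℝ) (p : ENNReal) : MemLp (fun ω => g (V ω)) p μ :=
  (memLp_map_measure_iff (measurable_of_finite g).aestronglyMeasurable hV.aemeasurable).1
    MemLp.of_discrete

theorem ProbabilityTheory.IndepFun.memLp_two_mul {X Y : Ω → ℝ} (hXY : IndepFun X Y μ)
    (hX : MemLp X 2 μ) (hY : MemLp Y 2 μ) : MemLp (fun ω => X ω * Y ω) 2 μ := by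
  have h := (hXY.comp (measurable_id.pow_const 2) (measurable_id.pow_const 2)).integrable_mul
    hX.integrable_sq hY.integrable_sq
  refine (memLp_two_iff_integrable_sq (hX.1.mul hY.1)).2 ?_
  exact h.congr (ae_of_all _ fun ω => (mul_pow (X ω) (Y ω) 2).symm)

theorem ProbabilityTheory.IndepFun.integral_mul_sq {X Y : Ω → ℝ} (hXY : IndepFun X Y μ)
    (hX : AEStronglyMeasurable X μ) (hY : AEStronglyMeasurable Y μ) :
    ∫ ω, (X ω * Y ω) ^ 2 ∂μ = (∫ ω, X ω ^ 2 ∂μ) * ∫ ω, Y ω ^ 2 ∂μ := by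
  simp_rw [mul_pow]
  exact (hXY.comp (measurable_id.pow_const 2)
    (measurable_id.pow_const 2)).integral_fun_mul_eq_mul_integral (hX.pow 2) (hY.pow 2)

theorem prod_Icc_one_eq_prod_fin {M : Type*} [CommMonoid M] (f : ℕ → M) (m : ℕ) :
    ∏ i ∈ Icc 1 m, f i = ∏ i : Fin m, f (i + 1) := by
  rw [Fin.prod_univ_eq_prod_range (fun i => f (i + 1)), range_eq_Ico, prod_Ico_add',
    zero_add, Ico_add_one_right_eq_Icc]

theorem sq_sum_sqrt_mul_geom_le {S r : ℝ} (hS : 0 ≤ S) (hr0 : 0 ≤ r) (hr1 : r < 1) (t : ℕ) :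
    (∑ m ∈ range t, √S * r ^ m) ^ 2 ≤ 2 * ((1 + S) / (1 - r)) ^ 2 :=
  calc (∑ m ∈ range t, √S * r ^ m) ^ 2 ≤ (√S / (1 - r)) ^ 2 := by
        rw [← mul_sum, div_eq_mul_one_div]
        gcongr
        simpa using geom_sum_Ico_le_of_lt_one hr0 hr1 (m := 0) (n := t)
    _ ≤ 2 * ((1 + S) / (1 - r)) ^ 2 := by
        rw [div_pow, div_pow, mul_div_assoc']
        gcongr
        nlinarith [Real.sq_sqrt hS]

section MarkovChain

variable {ι : Type*}

def pathWeight (a σ : ι → ℝ) {m : ℕ} (z : Fin (m + 1) → ι) : ℝ :=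
  (∏ i : Fin m, a (z i.succ)) * σ (z 0)

theorem prod_Icc_mul_eq_pathWeight (a σ : ι → ℝ) (m : ℕ) (x : ℕ → ι) :
    (∏ i ∈ Icc 1 m, a (x i)) * σ (x 0) = pathWeight a σ (fun i : Fin (m + 1) => x i) := by
  simp [pathWeight, prod_Icc_one_eq_prod_fin]

variable {Z : ℕ → Ω → ι} (a σ : ι → ℝ) (m : ℕ)
  [Fintype ι] [MeasurableSpace ι] [DiscreteMeasurableSpace ι]

theorem measurable_prod_Icc_mul (hZ : ∀ t, Measurable (Z t)) :
    Measurable fun ω => (∏ i ∈ Icc 1 m, a (Z i ω)) * σ (Z 0 ω) := by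
  simp only [prod_Icc_mul_eq_pathWeight]
  exact (measurable_of_finite (pathWeight a σ)).comp (measurable_pi_lambda _ fun i => hZ i)

theorem memLp_prod_Icc_mul [IsFiniteMeasure μ] (hZ : ∀ t, Measurable (Z t)) (p : ENNReal) :
    MemLp (fun ω => (∏ i ∈ Icc 1 m, a (Z i ω)) * σ (Z 0 ω)) p μ := by
  simp only [prod_Icc_mul_eq_pathWeight]
  exact memLp_comp_of_finite
    (measurable_pi_lambda (fun ω (i : Fin (m + 1)) => Z i ω) fun i => hZ i) (pathWeight a σ) p

theorem indepFun_prod_Icc_mul {β : Type*} [MeasurableSpace β] {ε : ℕ → Ω → β}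
    (h : Indep (⨆ t, MeasurableSpace.comap (Z t) inferInstance)
      (⨆ n, MeasurableSpace.comap (ε n) inferInstance) μ) (n : ℕ) :
    IndepFun (fun ω => (∏ i ∈ Icc 1 m, a (Z i ω)) * σ (Z 0 ω)) (ε n) μ :=
  indep_of_indep_of_le_left
    (indep_of_indep_of_le_right h
      (le_iSup (fun n => MeasurableSpace.comap (ε n) inferInstance) n))
    (measurable_prod_Icc_mul (mΩ := ⨆ t, MeasurableSpace.comap (Z t) inferInstance) a σ m
      fun t => (comap_measurable (Z t)).mono
        (le_iSup (fun t => MeasurableSpace.comap (Z t) inferInstance) t) le_rfl).comap_le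

theorem integral_sq_prod_Icc_mul_le [IsFiniteMeasure μ] (hZmeas : ∀ t, Measurable (Z t))
    {p₀ : ι → ℝ} {P : ι → ι → ℝ} (hp₀ : ∀ k, 0 ≤ p₀ k) (hP : ∀ k j, 0 ≤ P k j)
    (hZ : ∀ z : Fin (m + 1) → ι, μ {ω | ∀ i : Fin (m + 1), Z i ω = z i} =
      ENNReal.ofReal (p₀ (z 0) * ∏ i : Fin m, P (z i.castSucc) (z i.succ)))
    {lam : ℝ} (hrow : ∀ k, ∑ j, P k j * a j ^ 2 ≤ lam) (hlam : 0 ≤ lam) :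
    ∫ ω, ((∏ i ∈ Icc 1 m, a (Z i ω)) * σ (Z 0 ω)) ^ 2 ∂μ
      ≤ (∑ k, p₀ k * σ k ^ 2) * lam ^ m := by
  set V : Ω → Fin (m + 1) → ι := fun ω i => Z i ω
  have hV : Measurable V := measurable_pi_lambda _ fun i => hZmeas i
  have hcyl : ∀ z, V ⁻¹' {z} = {ω | ∀ i : Fin (m + 1), Z i ω = z i} := fun z => by
    ext ω; simp [V, funext_iff]
  simp only [prod_Icc_mul_eq_pathWeight]
  calc ∫ ω, pathWeight a σ (V ω) ^ 2 ∂μ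
      = ∑ z, μ.real (V ⁻¹' {z}) * pathWeight a σ z ^ 2 :=
        integral_comp_eq_sum_measureReal_preimage hV (pathWeight a σ · ^ 2)
    _ = ∑ z : Fin (m + 1) → ι, p₀ (z 0) * σ (z 0) ^ 2 *
          ∏ i : Fin m, (P (z i.castSucc) (z i.succ) * a (z i.succ) ^ 2) := by
        refine sum_congr rfl fun z _ => ?_
        rw [measureReal_def, hcyl, hZ, ENNReal.toReal_ofReal
          (mul_nonneg (hp₀ _) (prod_nonneg fun _ _ => hP _ _)), pathWeight, mul_pow,
          ← prod_pow, prod_mul_distrib]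
        ring
    _ ≤ (∑ k, p₀ k * σ k ^ 2) * lam ^ m :=
        sum_path_weights_le (fun k => mul_nonneg (hp₀ k) (sq_nonneg _))
          (fun k j => mul_nonneg (hP k j) (sq_nonneg _)) hrow hlam m

end MarkovChain

end

theorem stmt_15_general (K : ℕ) (P : Matrix (Fin K) (Fin K) ℝ)
    (hP0 : ∀ i j, 0 ≤ P i j)
    (μvec : Fin K → ℝ) (hμ0 : ∀ k, 0 ≤ μvec k)
    (a₁ σv : Fin K → ℝ) (lam : ℝ)
    (hlam : IsGreatest (Set.range fun k : Fin K => ∑ j, P k j * a₁ j ^ 2) lam)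
    (hlt : lam < 1)
    {Ω : Type*} [MeasurableSpace Ω] (μpr : Measure Ω) [IsProbabilityMeasure μpr]
    (Z : ℕ → Ω → Fin K) (ε : ℕ → Ω → ℝ)
    (hZmeas : ∀ t, Measurable (Z t)) (hεmeas : ∀ t, Measurable (ε t))
    (hZ : ∀ (n : ℕ) (z : Fin (n + 1) → Fin K),
      μpr {ω | ∀ i : Fin (n + 1), Z i ω = z i} =
        ENNReal.ofReal (μvec (z 0) * ∏ i : Fin n, P (z i.castSucc) (z i.succ)))
    (hεgauss : ∀ m, Measure.map (ε m) μpr = ProbabilityTheory.gaussianReal 0 1)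
    (hZε : ProbabilityTheory.Indep
      (⨆ t, MeasurableSpace.comap (Z t) inferInstance)
      (⨆ m, MeasurableSpace.comap (ε m) inferInstance) μpr)
    (t : ℕ) :
    ∫ ω, (∑ m ∈ Finset.range t,
        |(∏ i ∈ Finset.Icc 1 m, a₁ (Z i ω)) * σv (Z 0 ω) * ε m ω|) ^ 2 ∂μpr
      ≤ 2 * ((1 + ∑ k, μvec k * σv k ^ 2) / (1 - Real.sqrt lam)) ^ 2 := by
  set S := ∑ k, μvec k * σv k ^ 2
  set X : ℕ → Ω → ℝ := fun m ω => (∏ i ∈ Finset.Icc 1 m, a₁ (Z i ω)) * σv (Z 0 ω)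
  obtain ⟨⟨k₀, hk₀⟩, hmax⟩ := hlam
  have hrow : ∀ k, ∑ j, P k j * a₁ j ^ 2 ≤ lam := fun k => hmax ⟨k, rfl⟩
  have hlam0 : 0 ≤ lam := hk₀ ▸ sum_nonneg fun j _ => mul_nonneg (hP0 _ _) (sq_nonneg _)
  have hS0 : 0 ≤ S := sum_nonneg fun k _ => mul_nonneg (hμ0 k) (sq_nonneg _)
  have hr1 : √lam < 1 := (Real.sqrt_lt' one_pos).2 (by simpa using hlt)
  have hindep : ∀ m, IndepFun (X m) (ε m) μpr := fun m => indepFun_prod_Icc_mul a₁ σv m hZε m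
  have hterm : ∀ m, √(∫ ω, |X m ω * ε m ω| ^ 2 ∂μpr) ≤ √S * √lam ^ m := fun m => by
    simp_rw [sq_abs]
    rw [(hindep m).integral_mul_sq (measurable_prod_Icc_mul a₁ σv m hZmeas).aestronglyMeasurable
      (hεmeas m).aestronglyMeasurable,
      integral_sq_eq_one_of_map_eq_gaussianReal (hεmeas m) (hεgauss m), mul_one,
      Real.sqrt_le_left (by positivity), mul_pow, ← pow_mul, mul_comm m, pow_mul,
      Real.sq_sqrt hS0, Real.sq_sqrt hlam0]
    exact integral_sq_prod_Icc_mul_le a₁ σv m hZmeas hμ0 hP0 (hZ m) hrow hlam0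
  calc _ ≤ (∑ m ∈ range t, √(∫ ω, |X m ω * ε m ω| ^ 2 ∂μpr)) ^ 2 :=
        integral_sq_sum_le_sq_sum_sqrt fun m _ => ((hindep m).memLp_two_mul
          (memLp_prod_Icc_mul a₁ σv m hZmeas 2)
          (memLp_of_map_eq_gaussianReal (hεmeas m) (hεgauss m) 2)).abs
    _ ≤ (∑ m ∈ range t, √S * √lam ^ m) ^ 2 := by gcongr with m; exact hterm m
    _ ≤ 2 * ((1 + S) / (1 - √lam)) ^ 2 :=
        sq_sum_sqrt_mul_geom_le hS0 (Real.sqrt_nonneg lam) hr1 t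

/-- Noise-term bound (Equation (19) of the paper): if `λ = max_k ∑_j P k j a₁(j)² < 1`,
`(ε_m)` are i.i.d. standard normal independent of the chain `(Z_t)`, then for every
`t ≥ 1`, `E[(∑_{m=0}^{t-1} |(∏_{i=2}^{m+1} a₁(Z_i)) σ(Z₁) ε_m|)²]
  ≤ 2 ((1 + ∑_k μ_k σ(k)²) / (1 - √λ))²`.  Here `Z n` stands for `Z_{n+1}`. -/
theorem stmt_15 (K : ℕ) (P : Matrix (Fin K) (Fin K) ℝ)
    (hP0 : ∀ i j, 0 ≤ P i j) (hP1 : ∀ i, ∑ j, P i j = 1)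
    (μvec : Fin K → ℝ) (hμ0 : ∀ k, 0 ≤ μvec k) (hμ1 : ∑ k, μvec k = 1)
    (a₁ σv : Fin K → ℝ) (lam : ℝ)
    (hlam : IsGreatest (Set.range fun k : Fin K => ∑ j, P k j * a₁ j ^ 2) lam)
    (hlt : lam < 1)
    {Ω : Type*} [MeasurableSpace Ω] (μpr : Measure Ω) [IsProbabilityMeasure μpr]
    (Z : ℕ → Ω → Fin K) (ε : ℕ → Ω → ℝ)
    (hZmeas : ∀ t, Measurable (Z t)) (hεmeas : ∀ t, Measurable (ε t))
    (hZ : ∀ (n : ℕ) (z : Fin (n + 1) → Fin K),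
      μpr {ω | ∀ i : Fin (n + 1), Z i ω = z i} =
        ENNReal.ofReal (μvec (z 0) * ∏ i : Fin n, P (z i.castSucc) (z i.succ)))
    (hεindep : ProbabilityTheory.iIndepFun ε μpr)
    (hεgauss : ∀ m, Measure.map (ε m) μpr = ProbabilityTheory.gaussianReal 0 1)
    (hZε : ProbabilityTheory.Indep
      (⨆ t, MeasurableSpace.comap (Z t) inferInstance)
      (⨆ m, MeasurableSpace.comap (ε m) inferInstance) μpr)
    (t : ℕ) (ht : 1 ≤ t) :
    ∫ ω, (∑ m ∈ Finset.range t,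
        |(∏ i ∈ Finset.Icc 1 m, a₁ (Z i ω)) * σv (Z 0 ω) * ε m ω|) ^ 2 ∂μpr
      ≤ 2 * ((1 + ∑ k, μvec k * σv k ^ 2) / (1 - Real.sqrt lam)) ^ 2 :=
  stmt_15_general K P hP0 μvec hμ0 a₁ σv lam hlam hlt μpr Z ε hZmeas hεmeas hZ hεgauss hZε t
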